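/- arXiv:1312.2862 — 4 statements merged into one kernel-verified Lean document; each statement's English description precedes it below -/
import Mathlib

section
/- Given integers x_1, ..., x_k with k ≥ 3 and g = gcd(x_1, ..., x_k), there exists N ∈ ℕ such that for all n ∈ ℕ, there is a finite sequence of indices i_1, ..., i_J (each in {1,...,k}) with i_j ≠ i_{j+1} for all j, such that the sum x_{i_1} + x_{i_2} + ... + x_{i_J} equals N + n·g. -/
/-!
With at least three letters, an admissible word `l` can always be extended on the left by a
full cycle `s, s + 1, …, s - 1` of `Fin k`, and also by a letter `j` followed by such a cycle:
`s` only has to avoid `j` and the successor of the first letter of `l`. Hence every element of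
the additive monoid generated by `S = ∑ i, x i` and the numbers `x j + S` is an admissible sum.
These generators have the same gcd `g` as the `x i`, and a finitely generated submonoid of `ℕ`
contains all sufficiently large multiples of the gcd of its generators.
-/

def IsAdmissibleSum {k : ℕ} (x : Fin k → ℕ) (n : ℕ) : Prop :=
  ∃ l : List (Fin k), l.IsChain (· ≠ ·) ∧ (l.map x).sum = n

def blockSums {k : ℕ} (x : Fin k → ℕ) : Set ℕ :=
  insert (∑ i, x i) (Set.range fun j => x j + ∑ i, x i)

lemma setGcd_blockSums {k : ℕ} (x : Fin k → ℕ) :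
    Nat.setGcd (blockSums x) = Finset.univ.gcd x := by
  have hS : Finset.univ.gcd x ∣ ∑ i, x i :=
    Finset.dvd_sum fun i _ => Finset.gcd_dvd (Finset.mem_univ i)
  refine Nat.dvd_antisymm (Finset.dvd_gcd fun j _ => ?_) (Nat.dvd_setGcd_iff.2 ?_)
  · have hsum := Nat.setGcd_dvd_of_mem (Set.mem_insert _ _ : ∑ i, x i ∈ blockSums x)
    have hblock := Nat.setGcd_dvd_of_mem
      (Set.mem_insert_of_mem _ ⟨j, rfl⟩ : x j + ∑ i, x i ∈ blockSums x)
    exact (Nat.dvd_add_left hsum).1 hblock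
  · rintro _ (rfl | ⟨j, rfl⟩)
    exacts [hS, dvd_add (Finset.gcd_dvd (Finset.mem_univ j)) hS]

section
variable {k : ℕ} [NeZero k]

def cycleFrom (s : Fin k) : List (Fin k) := (List.finRange k).map (s + ·)

omit [NeZero k] in
lemma isChain_cycleFrom (s : Fin k) : (cycleFrom s).IsChain (· ≠ ·) :=
  (List.isChain_map _).2 <| (List.pairwise_lt_finRange k).isChain.imp
    fun _ _ hab h => hab.ne (add_left_cancel h)

lemma head?_cycleFrom (s : Fin k) : (cycleFrom s).head? = some s := by
  rw [cycleFrom, List.head?_map, List.head?_eq_getElem?,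
    List.getElem?_eq_getElem (by simp [NeZero.pos])]
  simp

lemma getLast?_cycleFrom (s : Fin k) : (cycleFrom s).getLast? = some (s - 1) := by
  rw [cycleFrom, List.getLast?_map, List.getLast?_eq_getElem?,
    List.getElem?_eq_getElem (by simp [NeZero.pos])]
  simp only [List.getElem_finRange, Option.map_some, sub_eq_add_neg, Option.some.injEq,
    add_right_inj, eq_neg_iff_add_eq_zero]
  ext
  simp [Fin.val_add, Nat.sub_add_cancel NeZero.one_le]

lemma sum_map_cycleFrom (x : Fin k → ℕ) (s : Fin k) :
    ((cycleFrom s).map x).sum = ∑ i, x i := by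
  rw [cycleFrom, List.map_map, ← Equiv.sum_comp (Equiv.addLeft s) x, Fin.sum_univ_def]
  rfl

lemma exists_isChain_cycleFrom_append (hk : 3 ≤ k) {l : List (Fin k)}
    (hl : l.IsChain (· ≠ ·)) (b : Fin k) :
    ∃ s, s ≠ b ∧ (cycleFrom s ++ l).IsChain (· ≠ ·) := by
  obtain ⟨s, hsb, hsl⟩ := Fin.exists_ne_and_ne_of_two_lt b (l.headD 0 + 1) hk
  refine ⟨s, hsb, (isChain_cycleFrom s).append hl ?_⟩
  intro a ha c hc
  obtain rfl : a = s - 1 := by simpa [getLast?_cycleFrom] using ha.symm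
  have : l.headD 0 = c := by simp_all [List.headD_eq_head?_getD]
  exact fun h => hsl (by rw [this, ← h, sub_add_cancel])

namespace IsAdmissibleSum
variable {x : Fin k → ℕ} {n : ℕ}

lemma sum_add (hk : 3 ≤ k) (h : IsAdmissibleSum x n) : IsAdmissibleSum x (∑ i, x i + n) := by
  obtain ⟨l, hl, rfl⟩ := h
  obtain ⟨s, -, hs⟩ := exists_isChain_cycleFrom_append hk hl 0
  exact ⟨_, hs, by rw [List.map_append, List.sum_append, sum_map_cycleFrom]⟩

lemma apply_add_sum_add (hk : 3 ≤ k) (h : IsAdmissibleSum x n) (j : Fin k) :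
    IsAdmissibleSum x (x j + ∑ i, x i + n) := by
  obtain ⟨l, hl, rfl⟩ := h
  obtain ⟨s, hsj, hs⟩ := exists_isChain_cycleFrom_append hk hl j
  refine ⟨j :: (cycleFrom s ++ l), hs.cons ?_, ?_⟩
  · simp [List.head?_append, head?_cycleFrom, hsj.symm]
  · simp [sum_map_cycleFrom, add_assoc]

end IsAdmissibleSum

lemma isAdmissibleSum_of_mem_closure_blockSums (hk : 3 ≤ k) {x : Fin k → ℕ} {n : ℕ}
    (hn : n ∈ AddSubmonoid.closure (blockSums x)) : IsAdmissibleSum x n := by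
  induction hn using AddSubmonoid.closure_induction_left with
  | zero => exact ⟨[], .nil, rfl⟩
  | add_left b hb n _ ih =>
    obtain rfl | ⟨j, rfl⟩ := hb
    · exact ih.sum_add hk
    · exact ih.apply_add_sum_add hk j

end

theorem stmt0_general (k : ℕ) (hk : 3 ≤ k) (x : Fin k → ℕ) :
    ∃ N : ℕ, ∀ n : ℕ, ∃ l : List (Fin k), l.Chain' (· ≠ ·) ∧
      (l.map x).sum = N + n * Finset.univ.gcd x := by
  have : NeZero k := ⟨by omega⟩
  obtain ⟨N, hN⟩ := Nat.exists_mem_closure_of_ge (blockSums x)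
  rw [setGcd_blockSums] at hN
  refine ⟨N * Finset.univ.gcd x, fun n => isAdmissibleSum_of_mem_closure_blockSums hk ?_⟩
  rw [← add_mul]
  rcases (Finset.univ.gcd x).eq_zero_or_pos with hg | hg
  · simp [hg]
  · exact hN _ ((N.le_add_right n).trans (Nat.le_mul_of_pos_right _ hg)) (dvd_mul_left _ _)

/-- stability of admissible (no-consecutive-repeat) sums. -/
theorem stmt0 (k : ℕ) (hk : 3 ≤ k) (x : Fin k → ℕ) (hx : ∀ i, 0 < x i) :
    ∃ N : ℕ, ∀ n : ℕ, ∃ l : List (Fin k), l.Chain' (· ≠ ·) ∧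
      (l.map x).sum = N + n * Finset.univ.gcd x :=
  stmt0_general k hk x
end

section
/- If g = gcd(x_1, ..., x_k) for integers x_1, ..., x_k, and s = x_1 + ... + x_k, then g divides s; moreover, writing g = a_1·x_1 + ... + a_k·x_k with integer coefficients, M = max_i a_i, and m = min_i a_i, every integer C divisible by g with C > 2ks(s/g)(M−m) can be written as C = (c + dM)s − Σ_i d(M − a_i)·x_i for some nonnegative integers c, d with d < s/g, c ≥ 2k(s/g)(M−m), and each coefficient d(M − a_i) nonnegative. -/
/-- decomposition of large multiples of the gcd via Bézout data. -/
theorem stmt1 (k : ℕ) (hk : 0 < k) (x a : Fin k → ℤ) (hx : ∀ i, 0 < x i)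
    (hne : (Finset.univ : Finset (Fin k)).Nonempty)
    (g s M m : ℤ)
    (hg : g = Finset.univ.gcd x)
    (hs : s = ∑ i, x i)
    (ha : g = ∑ i, a i * x i)
    (hM : M = Finset.univ.sup' hne a)
    (hm : m = Finset.univ.inf' hne a) :
    g ∣ s ∧ ∀ C : ℤ, g ∣ C → 2 * k * s * (s / g) * (M - m) < C →
      ∃ c d : ℤ, 0 ≤ c ∧ 0 ≤ d ∧ d < s / g ∧ 2 * k * (s / g) * (M - m) ≤ c ∧
        (∀ i, 0 ≤ d * (M - a i)) ∧
        C = (c + d * M) * s - ∑ i, d * (M - a i) * x i := by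
  have hdvd : ∀ i : Fin k, g ∣ x i := fun i => hg ▸ Finset.gcd_dvd (Finset.mem_univ i)
  have hgs : g ∣ s := hs ▸ Finset.dvd_sum (fun i _ => hdvd i)
  have i0 : Fin k := ⟨0, hk⟩
  have hnn : 0 ≤ g := Int.nonneg_of_normalize_eq_self (hg ▸ Finset.normalize_gcd)
  have hg0 : 0 < g := by
    rcases eq_or_lt_of_le hnn with h | h
    · exfalso
      have := zero_dvd_iff.mp (h ▸ hdvd i0)
      have := hx i0
      omega
    · exact h
  have hs0 : 0 < s := by
    rw [hs]
    exact Finset.sum_pos (fun i _ => hx i) hne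
  set q : ℤ := s / g with hq
  have hsq : s = g * q := by rw [hq, mul_comm]; exact (Int.ediv_mul_cancel hgs).symm
  have hq0 : 0 < q := by
    rcases le_or_gt q 0 with h | h
    · nlinarith
    · exact h
  have hMa : ∀ i, a i ≤ M := fun i => hM ▸ Finset.le_sup' a (Finset.mem_univ i)
  have hma : ∀ i, m ≤ a i := fun i => hm ▸ Finset.inf'_le a (Finset.mem_univ i)
  have hMm : 0 ≤ M - m := by have := hMa i0; have := hma i0; omega
  refine ⟨hgs, fun C hgC hbig => ?_⟩
  obtain ⟨N, hN⟩ := hgC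
  set d : ℤ := N % q with hd
  set c : ℤ := N / q with hc
  have hd0 : 0 ≤ d := Int.emod_nonneg N (ne_of_gt hq0)
  have hdq : d < q := Int.emod_lt_of_pos N hq0
  have hNcd : N = c * q + d := by rw [hc, hd, mul_comm]; exact (Int.mul_ediv_add_emod N q).symm
  -- C = c * s + d * g
  have hCsd : C = c * s + d * g := by rw [hN, hNcd, hsq]; ring
  have hTc : 2 * k * q * (M - m) ≤ c := by
    rw [hc, Int.le_ediv_iff_mul_le hq0]
    have h1 : g * (2 * k * q * (M - m) * q) < g * N := by
      calc g * (2 * k * q * (M - m) * q) = 2 * k * (g * q) * q * (M - m) := by ring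
        _ = 2 * k * s * q * (M - m) := by rw [← hsq]
        _ < C := hbig
        _ = g * N := hN
    have := lt_of_mul_lt_mul_left h1 (le_of_lt hg0)
    omega
  have hc0 : 0 ≤ c := le_trans (by positivity) hTc
  refine ⟨c, d, hc0, hd0, hdq, hTc, fun i => mul_nonneg hd0 (by have := hMa i; omega), ?_⟩
  have hsum : ∑ i, d * (M - a i) * x i = d * M * s - d * g := by
    rw [hs, ha, Finset.mul_sum, Finset.mul_sum, ← Finset.sum_sub_distrib]
    exact Finset.sum_congr rfl (fun i _ => by ring)
  rw [hsum, hCsd]; ring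
end

section
/- Every integer multiple of g = gcd(x_1, ..., x_k) that exceeds 2ks(s/g)(M−m) (with s, M, m as in the Bézout data) can be realized as a sum Σ_j x_{i_j} over a sequence with no two consecutive indices equal, provided k ≥ 3. -/
/-!
Write `C = g w`, `s = g t` and divide `w = t v + u` with `0 ≤ u < t`. The coefficients
`c i = u a i + v` satisfy `∑ c i x i = u g + v s = C`; they differ pairwise by at most
`E = t (M - m)`, and since `v ≥ 2 k E` each of them is at least `k E`. For `k ≥ 3` this forces
`2 c i ≤ ∑ c`, and a multiset in which no element fills more than half (rounded up) of it can be
arranged with no two equal neighbours, by repeatedly placing the most frequent element that differs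
from the previous one. Arranging `c i` copies of each `i` gives the required sequence.
-/

open Finset

namespace Multiset

variable {α : Type*} [DecidableEq α] {s : Multiset α} {i j : α}

theorem count_add_count_le_card (hij : i ≠ j) (s : Multiset α) :
    count i s + count j s ≤ card s := by
  rw [← card_replicate (count i s) i, ← card_replicate (count j s) j, ← card_add]
  refine card_le_card (le_iff_count.2 fun a => ?_)
  rw [count_add, count_replicate, count_replicate]
  split_ifs <;> simp_all

theorem two_mul_count_le_card_of_count_le (hij : i ≠ j) (h : count j s ≤ count i s) :
    2 * count j s ≤ card s := by
  have := count_add_count_le_card hij s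
  omega

theorem two_mul_count_erase_le (hbal : ∀ j, 2 * count j s ≤ card s + 1) (hi : i ∈ s)
    (hj : j ≠ i → 2 * count j s ≤ card s) : 2 * count j (s.erase i) ≤ card (s.erase i) + 1 := by
  have hcard := card_erase_add_one hi
  by_cases hji : j = i
  · subst hji
    have := hbal j
    rw [count_erase_self]
    omega
  · rw [count_erase_of_ne hji]
    have := hj hji
    omega

theorem exists_isChain_cons_coe_eq (s : Multiset α) (p : α)
    (hbal : ∀ j, 2 * count j s ≤ card s + 1) (hp : 2 * count p s ≤ card s) :
    ∃ l : List α, (p :: l).IsChain (· ≠ ·) ∧ (l : Multiset α) = s := by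
  induction hn : card s generalizing s p with
  | zero => exact ⟨[], .singleton p, (card_eq_zero.1 hn).symm⟩
  | succ n ih =>
    have hne : s.filter (· ≠ p) ≠ 0 := fun h => by
      have := count_eq_card.2 fun x hx => (not_not.1 (filter_eq_nil.1 h x hx)).symm
      omega
    -- greedy choice: the most frequent element other than `p` goes first
    obtain ⟨i, hi, hmax⟩ := exists_max_image (count · s) hne
    rw [mem_filter] at hi
    have hdom : ∀ j ≠ i, 2 * count j s ≤ card s := fun j hji => by
      by_cases hjp : j = p
      · subst hjp; omega
      by_cases hjs : j ∈ s
      · exact two_mul_count_le_card_of_count_le (Ne.symm hji) (hmax j (mem_filter.2 ⟨hjs, hjp⟩))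
      · simp [count_eq_zero.2 hjs]
    have hcard : card (s.erase i) = n := by have := card_erase_add_one hi.1; omega
    obtain ⟨l, hl, hls⟩ := ih (s.erase i) i (fun j => two_mul_count_erase_le hbal hi.1 (hdom j))
      (by rw [count_erase_self]; have := hbal i; omega) hcard
    refine ⟨i :: l, List.isChain_cons_cons.2 ⟨hi.2.symm, hl⟩, ?_⟩
    rw [← cons_coe, hls, cons_erase hi.1]

theorem exists_isChain_coe_eq (s : Multiset α) (hbal : ∀ j, 2 * count j s ≤ card s + 1) :
    ∃ l : List α, l.IsChain (· ≠ ·) ∧ (l : Multiset α) = s := by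
  rcases eq_or_ne s 0 with rfl | hs
  · exact ⟨[], .nil, rfl⟩
  obtain ⟨i, hi, hmax⟩ := exists_max_image (count · s) hs
  have hdom : ∀ j ≠ i, 2 * count j s ≤ card s := fun j hji => by
    by_cases hjs : j ∈ s
    · exact two_mul_count_le_card_of_count_le (Ne.symm hji) (hmax j hjs)
    · simp [count_eq_zero.2 hjs]
  have hcard := card_erase_add_one hi
  obtain ⟨l, hl, hls⟩ := exists_isChain_cons_coe_eq (s.erase i) i
    (fun j => two_mul_count_erase_le hbal hi (hdom j))
    (by rw [count_erase_self]; have := hbal i; omega)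
  exact ⟨i :: l, hl, by rw [← cons_coe, hls, cons_erase hi]⟩

theorem sum_map_eq_sum_count [Fintype α] {M : Type*} [AddCommMonoid M] (s : Multiset α)
    (f : α → M) : (s.map f).sum = ∑ i, count i s • f i := by
  rw [Finset.sum_multiset_map_count]
  exact sum_subset (subset_univ _) fun i _ hi => by
    rw [count_eq_zero.2 (by simpa using hi), zero_smul]

end Multiset

theorem List.exists_isChain_sum_map_eq {ι M : Type*} [Fintype ι] [DecidableEq ι] [AddCommMonoid M]
    (c : ι → ℕ) (x : ι → M) (hbal : ∀ i, 2 * c i ≤ ∑ j, c j + 1) :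
    ∃ l : List ι, l.IsChain (· ≠ ·) ∧ (l.map x).sum = ∑ i, c i • x i := by
  have hcount : ∀ i, (∑ j, Multiset.replicate (c j) j).count i = c i := fun i => by
    simp [Multiset.count_sum', Multiset.count_replicate]
  obtain ⟨l, hl, hls⟩ := (∑ j, Multiset.replicate (c j) j).exists_isChain_coe_eq
    (by simpa [hcount] using hbal)
  refine ⟨l, hl, ?_⟩
  rw [← Multiset.sum_coe, ← Multiset.map_coe, hls, Multiset.sum_map_eq_sum_count]
  simp only [hcount]

theorem Finset.gcd_pos_of_exists_ne_zero {ι : Type*} {s : Finset ι} {f : ι → ℤ}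
    (h : ∃ i ∈ s, f i ≠ 0) : 0 < s.gcd f := by
  obtain ⟨i, hi, hfi⟩ := h
  exact lt_of_le_of_ne (Int.nonneg_of_normalize_eq_self normalize_gcd) fun h0 =>
    hfi (gcd_eq_zero_iff.1 h0.symm i hi)

theorem two_mul_le_sum_of_forall_le_add {ι R : Type*} [Fintype ι] [CommRing R] [LinearOrder R]
    [IsStrictOrderedRing R] (c : ι → R) (E : R) (hk : 3 ≤ Fintype.card ι)
    (hlow : ∀ i, Fintype.card ι * E ≤ c i) (hspread : ∀ i j, c i ≤ c j + E) (i : ι) :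
    2 * c i ≤ ∑ j, c j := by
  have hE : 0 ≤ E := by linarith [hspread i i]
  have hsum : Fintype.card ι * (c i - E) ≤ ∑ j, c j := by
    have := sum_le_sum fun j (_ : j ∈ univ) => sub_le_iff_le_add.2 (hspread i j)
    rwa [sum_const, card_univ, nsmul_eq_mul] at this
  have hk' : (3 : R) ≤ Fintype.card ι := by exact_mod_cast hk
  nlinarith [hlow i, mul_nonneg hE (sub_nonneg.2 hk')]

theorem exists_nonneg_coeffs_two_mul_le_sum {ι : Type*} [Fintype ι] (x a : ι → ℤ) (g t m M w : ℤ)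
    (ht : 0 < t) (hsum : ∑ i, x i = g * t) (ha : ∑ i, a i * x i = g)
    (hma : ∀ i, m ≤ a i ∧ a i ≤ M) (hpos : ∃ j, 0 ≤ a j) (hk : 3 ≤ Fintype.card ι)
    (hw : 2 * Fintype.card ι * t * (t * (M - m)) < w) :
    ∃ c : ι → ℤ, (∀ i, 0 ≤ c i) ∧ (∀ i, 2 * c i ≤ ∑ j, c j) ∧ ∑ i, c i * x i = g * w := by
  set k : ℤ := (Fintype.card ι : ℤ)
  set E := t * (M - m)
  set u := w % t
  set v := w / t
  have hu : 0 ≤ u := Int.emod_nonneg _ ht.ne'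
  have hut : u < t := Int.emod_lt_of_pos _ ht
  have hdiv : t * v + u = w := Int.mul_ediv_add_emod w t
  have hspread (i j : ι) : u * a i + v ≤ u * a j + v + E := by nlinarith [hma i, hma j]
  have hv : 2 * k * E ≤ v := by
    by_contra! h
    nlinarith
  obtain ⟨j, hj⟩ := hpos
  have hE : 0 ≤ E := mul_nonneg ht.le (by linarith [hma j])
  have hk' : (3 : ℤ) ≤ k := by unfold k; exact_mod_cast hk
  have hlow (i : ι) : k * E ≤ u * a i + v := by nlinarith [hspread j i, mul_nonneg hu hj]
  refine ⟨fun i => u * a i + v, fun i => (by positivity : 0 ≤ k * E).trans (hlow i),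
    two_mul_le_sum_of_forall_le_add _ E hk hlow hspread, ?_⟩
  calc ∑ i, (u * a i + v) * x i = u * ∑ i, a i * x i + v * ∑ i, x i := by
        simp only [add_mul, sum_add_distrib, mul_sum, mul_assoc]
    _ = g * w := by rw [ha, hsum]; linear_combination g * hdiv

/-- every sufficiently large multiple of the gcd is an admissible sum. -/
theorem stmt2 (k : ℕ) (hk : 3 ≤ k) (x a : Fin k → ℤ) (hx : ∀ i, 0 < x i)
    (hne : (Finset.univ : Finset (Fin k)).Nonempty)
    (g s M m : ℤ)
    (hg : g = Finset.univ.gcd x)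
    (hs : s = ∑ i, x i)
    (ha : g = ∑ i, a i * x i)
    (hM : M = Finset.univ.sup' hne a)
    (hm : m = Finset.univ.inf' hne a) :
    ∀ C : ℤ, g ∣ C → 2 * k * s * (s / g) * (M - m) < C →
      ∃ l : List (Fin k), l.Chain' (· ≠ ·) ∧ (l.map x).sum = C := by
  rintro C ⟨w, rfl⟩ hbig
  obtain ⟨i₀, -⟩ := id hne
  have hg0 : 0 < g := hg ▸ gcd_pos_of_exists_ne_zero ⟨i₀, mem_univ i₀, (hx i₀).ne'⟩
  obtain ⟨t, hst⟩ : g ∣ s := hs ▸ dvd_sum fun i _ => hg ▸ gcd_dvd (mem_univ i)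
  have ht : 0 < t := pos_of_mul_pos_right (hst ▸ hs ▸ sum_pos (fun i _ => hx i) hne) hg0.le
  have hma (i : Fin k) : m ≤ a i ∧ a i ≤ M :=
    ⟨hm ▸ inf'_le _ (mem_univ i), hM ▸ le_sup' _ (mem_univ i)⟩
  have hpos : ∃ j, 0 ≤ a j := by
    by_contra! h
    have := sum_neg (fun j _ => mul_neg_of_neg_of_pos (h j) (hx j)) hne
    omega
  have hw : 2 * Fintype.card (Fin k) * t * (t * (M - m)) < w := by
    rw [hst, Int.mul_ediv_cancel_left _ hg0.ne'] at hbig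
    rw [Fintype.card_fin]
    exact lt_of_mul_lt_mul_left (by linarith) hg0.le
  obtain ⟨c, hc0, hbal, hcx⟩ := exists_nonneg_coeffs_two_mul_le_sum x a g t m M w ht (hs ▸ hst)
    ha.symm hma hpos (by simpa) hw
  lift c to Fin k → ℕ using hc0
  obtain ⟨l, hl, hlx⟩ := List.exists_isChain_sum_map_eq c x fun i => by
    have h := hbal i
    simp only at h
    exact Nat.le_succ_of_le (by exact_mod_cast h)
  exact ⟨l, hl, by simpa [hlx] using hcx⟩
end

section
/- Let x_1, ..., x_k be positive integers with k ≥ 3 and g = gcd(x_1,...,x_k). Then the set of integers expressible as Σ_{j=1}^J x_{i_j} with i_j ≠ i_{j+1} for all j contains all sufficiently large multiples of g. In particular, the numerical-semigroup-like set generated by such no-consecutive-repeat sums has finite complement in g·ℕ. -/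
/-!
Every sum of pairs `x i + x j` with `i ≠ j` is an admissible sum: writing the pairs one after
another, each pair can be flipped so that it does not start with the index the previous one ended
with. By the Frobenius-number theorem, all large multiples of the gcd `d` of the pair sums are sums
of pairs. As `k ≥ 3`, every `i` has two further indices `j ≠ l`, and
`2 x_i = (x_i + x_j) + (x_i + x_l) - (x_j + x_l)`, so `g ∣ d ∣ 2 g`. If `d = 2 g`, a multiple of
`g` that is not a multiple of `d` is reached by putting in front a single `x i` with `x i / g` odd.
-/

theorem Nat.eq_or_eq_two_mul_of_dvd_of_dvd_two_mul {g d : ℕ} (hgd : g ∣ d) (hd : d ∣ 2 * g) :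
    d = g ∨ d = 2 * g := by
  obtain ⟨m, rfl⟩ := hgd
  rcases Nat.eq_zero_or_pos g with rfl | hg
  · simp
  have hm : m ∣ 2 := Nat.dvd_of_mul_dvd_mul_left hg (by rwa [mul_comm 2 g] at hd)
  rcases (Nat.dvd_prime Nat.prime_two).mp hm with rfl | rfl
  · simp
  · simp [mul_comm]

theorem Nat.two_mul_dvd_sub_of_not_two_mul_dvd {g a b : ℕ} (ha : g ∣ a) (hb : g ∣ b)
    (ha₂ : ¬ 2 * g ∣ a) (hb₂ : ¬ 2 * g ∣ b) : 2 * g ∣ a - b := by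
  obtain ⟨a, rfl⟩ := ha
  obtain ⟨b, rfl⟩ := hb
  rw [← Nat.mul_sub, mul_comm 2 g]
  refine Nat.mul_dvd_mul_left g ?_
  have ha' : ¬ 2 ∣ a := fun h => ha₂ (by rw [mul_comm 2 g]; exact Nat.mul_dvd_mul_left g h)
  have hb' : ¬ 2 ∣ b := fun h => hb₂ (by rw [mul_comm 2 g]; exact Nat.mul_dvd_mul_left g h)
  omega

section PairSums

variable {ι : Type*} (x : ι → ℕ)

def pairSums : Set ℕ := {n | ∃ i j, i ≠ j ∧ x i + x j = n}

theorem exists_isChain_cons_of_mem_closure_pairSums {n : ℕ}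
    (hn : n ∈ AddSubmonoid.closure (pairSums x)) (e : ι) :
    ∃ l : List ι, (e :: l).IsChain (· ≠ ·) ∧ (l.map x).sum = n := by
  induction hn using AddSubmonoid.closure_induction generalizing e with
  | mem n hn =>
    obtain ⟨i, j, hij, rfl⟩ := hn
    by_cases hei : e = i
    · subst hei
      exact ⟨[j, e], by simp [hij, hij.symm], by simp [add_comm]⟩
    · exact ⟨[i, j], by simp [hei, hij], by simp⟩
  | zero => exact ⟨[], by simp, rfl⟩
  | add m n _ _ ihm ihn =>
    obtain ⟨l₁, h₁, rfl⟩ := ihm e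
    obtain ⟨l₂, h₂, rfl⟩ := ihn ((e :: l₁).getLast (List.cons_ne_nil _ _))
    refine ⟨l₁ ++ l₂, ?_, by simp⟩
    rw [← List.cons_append]
    refine h₁.append h₂.tail fun a ha b hb => ?_
    rw [List.getLast?_eq_some_getLast (List.cons_ne_nil _ _), Option.mem_some_iff] at ha
    exact ha ▸ h₂.rel_head? hb

variable [Fintype ι]

theorem setGcd_pairSums_dvd_two_mul (hι : 3 ≤ Fintype.card ι) (i : ι) :
    Nat.setGcd (pairSums x) ∣ 2 * x i := by
  classical
  have hcard : 1 < (Finset.univ.erase i).card := by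
    rw [Finset.card_erase_of_mem (Finset.mem_univ i), Finset.card_univ]
    omega
  obtain ⟨j, hj, l, hl, hjl⟩ := Finset.one_lt_card.mp hcard
  have hsum {a b : ι} (hab : a ≠ b) : Nat.setGcd (pairSums x) ∣ x a + x b :=
    Nat.setGcd_dvd_of_mem ⟨a, b, hab, rfl⟩
  have hij := hsum (Finset.ne_of_mem_erase hj).symm
  have hil := hsum (Finset.ne_of_mem_erase hl).symm
  refine (Nat.dvd_add_left (hsum hjl)).mp ?_
  rw [show 2 * x i + (x j + x l) = (x i + x j) + (x i + x l) by ring]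
  exact dvd_add hij hil

theorem setGcd_pairSums_dvd_two_mul_gcd (hι : 3 ≤ Fintype.card ι) :
    Nat.setGcd (pairSums x) ∣ 2 * Finset.univ.gcd x := by
  rw [← normalize_eq 2, ← Finset.gcd_mul_left]
  exact Finset.dvd_gcd fun i _ => setGcd_pairSums_dvd_two_mul x hι i

theorem gcd_dvd_setGcd_pairSums : Finset.univ.gcd x ∣ Nat.setGcd (pairSums x) :=
  Nat.dvd_setGcd_iff.mpr fun _ ⟨i, j, _, hn⟩ =>
    hn ▸ dvd_add (Finset.gcd_dvd (Finset.mem_univ i)) (Finset.gcd_dvd (Finset.mem_univ j))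

theorem setGcd_pairSums_eq_or_eq_two_mul_gcd (hι : 3 ≤ Fintype.card ι) :
    Nat.setGcd (pairSums x) = Finset.univ.gcd x ∨
      Nat.setGcd (pairSums x) = 2 * Finset.univ.gcd x :=
  Nat.eq_or_eq_two_mul_of_dvd_of_dvd_two_mul (gcd_dvd_setGcd_pairSums x)
    (setGcd_pairSums_dvd_two_mul_gcd x hι)

end PairSums

/-- the set of admissible (no-consecutive-repeat) sums of the `x i`
contains all sufficiently large multiples of `g = gcd(x_1, ..., x_k)`. -/
theorem stmt10 (k : ℕ) (hk : 3 ≤ k) (x : Fin k → ℕ) (hx : ∀ i, 0 < x i) :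
    ∃ N : ℕ, ∀ C : ℕ, Finset.univ.gcd x ∣ C → N ≤ C →
      ∃ l : List (Fin k), l.Chain' (· ≠ ·) ∧ (l.map x).sum = C := by
  have hd := setGcd_pairSums_eq_or_eq_two_mul_gcd x (by simpa using hk)
  obtain ⟨N, hN⟩ := Nat.exists_mem_closure_of_ge (pairSums x)
  set g := Finset.univ.gcd x
  set d := Nat.setGcd (pairSums x)
  have i₀ : Fin k := ⟨0, by omega⟩
  have hg : 0 < g := Nat.pos_of_dvd_of_pos (Finset.gcd_dvd (Finset.mem_univ i₀)) (hx i₀)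
  refine ⟨N + Finset.univ.sup x, fun C hgC hC => ?_⟩
  by_cases hdC : d ∣ C
  · obtain ⟨l, hl, hsum⟩ :=
      exists_isChain_cons_of_mem_closure_pairSums x (hN C (by omega) hdC) i₀
    exact ⟨l, hl.tail, hsum⟩
  have hd₂ : d = 2 * g := hd.resolve_left fun h => hdC (by rwa [h])
  obtain ⟨i, hi⟩ : ∃ i, ¬ 2 * g ∣ x i := by
    by_contra! h
    exact absurd (Nat.le_of_dvd hg (Finset.dvd_gcd fun i _ => h i)) (by omega)
  have hxi : x i ≤ Finset.univ.sup x := Finset.le_sup (Finset.mem_univ i)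
  have hdvd : d ∣ C - x i := hd₂ ▸
    Nat.two_mul_dvd_sub_of_not_two_mul_dvd hgC (Finset.gcd_dvd (Finset.mem_univ i)) (hd₂ ▸ hdC) hi
  obtain ⟨l, hl, hsum⟩ :=
    exists_isChain_cons_of_mem_closure_pairSums x (hN (C - x i) (by omega) hdvd) i
  exact ⟨i :: l, hl, by simp only [List.map_cons, List.sum_cons, hsum]; omega⟩
end
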